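/- arXiv:math/0301315 — 3 statements merged into one kernel-verified Lean document; each statement's English description precedes it below -/
import Mathlib

section
/- There exists a constant C depending only on p and q such that for every linear map A : ℝ^p → ℝ^q, the curve s ↦ P(graph(s·A)) of orthogonal projections of ℝ^{p+q} onto the graphs graph(s·A) = {(x, s·A x) : x ∈ ℝ^p} ⊆ ℝ^p × ℝ^q = ℝ^{p+q} has total variation at most C over s ∈ ℝ, uniformly in A: for every finite partition s_0 < ... < s_k of ℝ, Σ_{j} ‖P(graph(s_{j+1}A)) − P(graph(s_j A))‖ ≤ C. (These curves are, up to the reparametrization s = 1/t, exactly the trajectories {(\tfrac{1}{t}\alpha_x, \alpha_x) : 0 < t < ∞} of the Harvey–Lawson multiplicative flow φ_t(e,f) = (te,f) through the graph of a linear map, the case of Theorem 3 needed for Theorem 2.) -/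
open Finset

/-- `ℝ^{p+q}` as the `ℓ²`-product `ℝ^p × ℝ^q`. -/
abbrev EucProd (p q : ℕ) := WithLp 2 (EuclideanSpace ℝ (Fin p) × EuclideanSpace ℝ (Fin q))

/-- The graph `{(x, A x) : x ∈ ℝ^p}` of a linear map `A : ℝ^p → ℝ^q`, as a subspace of
`ℝ^{p+q} = ℝ^p × ℝ^q`. -/
noncomputable def graphSub {p q : ℕ}
    (A : EuclideanSpace ℝ (Fin p) →ₗ[ℝ] EuclideanSpace ℝ (Fin q)) :
    Submodule ℝ (EucProd p q) :=
  (LinearMap.graph A).comap (WithLp.linearEquiv 2 ℝ _).toLinearMap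

/-- The orthogonal projection of `ℝ^{p+q}` onto a subspace `V`, as an endomorphism. -/
noncomputable def projOnto {p q : ℕ} (V : Submodule ℝ (EucProd p q)) :
    EucProd p q →L[ℝ] EucProd p q :=
  V.subtypeL ∘L V.orthogonalProjection

/-!
Choose an orthonormal basis `eᵢ` of `ℝ^p` with `A eᵢ` pairwise orthogonal (an eigenbasis of
`AᵀA`). With `θᵢ(s) = arctan (s ‖A eᵢ‖)`, the vectors `cos θᵢ(s) • (eᵢ, s A eᵢ)` form an orthonormal
basis of `graph(s A)`, and the `i`-th vectors for `s` and `s'` meet at the angle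
`θᵢ(s') - θᵢ(s)`, while vectors with different indices stay orthogonal. Writing `P(graph(s A))`
as the sum of the rank-one projections onto these vectors gives
`‖P(graph(s' A)) - P(graph(s A))‖ ≤ 2 ∑ᵢ |θᵢ(s') - θᵢ(s)|`. Each `θᵢ` is monotone with values in
`(-π/2, π/2)`, so over any partition the right-hand sides telescope to at most `2 p π`.
-/

open scoped RealInnerProductSpace
open InnerProductSpace (rankOne)

namespace Real

theorem cos_arctan_sub_arctan (a b : ℝ) :
    cos (arctan a - arctan b) = cos (arctan a) * cos (arctan b) * (1 + a * b) := by
  have ha : 0 < √(1 + a ^ 2) := by positivity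
  have hb : 0 < √(1 + b ^ 2) := by positivity
  rw [cos_sub, sin_arctan, sin_arctan, cos_arctan, cos_arctan]
  field_simp

end Real

theorem Fin.sum_succ_sub_castSucc {M : Type*} [AddCommGroup M] {k : ℕ} (f : Fin (k + 1) → M) :
    ∑ j : Fin k, (f j.succ - f j.castSucc) = f (Fin.last k) - f 0 := by
  induction k with
  | zero => simp
  | succ k ih =>
    rw [Fin.sum_univ_castSucc, Fin.succ_last]
    simp only [Fin.succ_castSucc, ih fun j => f j.castSucc, Fin.castSucc_zero]
    abel

theorem Monotone.sum_abs_succ_sub_castSucc {k : ℕ} {f : Fin (k + 1) → ℝ} (hf : Monotone f) :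
    ∑ j : Fin k, |f j.succ - f j.castSucc| = f (Fin.last k) - f 0 := by
  rw [← Fin.sum_succ_sub_castSucc]
  exact Finset.sum_congr rfl fun j _ =>
    abs_of_nonneg (sub_nonneg.2 (hf Fin.castSucc_lt_succ.le))

section InnerProductSpace

variable {𝕜 E : Type*} [RCLike 𝕜] [NormedAddCommGroup E] [InnerProductSpace 𝕜 E]

theorem norm_rankOne_self_sub_rankOne_self_le {v w : E} (hv : ‖v‖ ≤ 1) (hw : ‖w‖ ≤ 1) :
    ‖rankOne 𝕜 v v - rankOne 𝕜 w w‖ ≤ 2 * ‖v - w‖ := by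
  have h : rankOne 𝕜 v v - rankOne 𝕜 w w = rankOne 𝕜 (v - w) v + rankOne 𝕜 w (v - w) := by
    simp only [map_sub, FunLike.coe_sub, Pi.sub_apply]
    abel
  calc ‖rankOne 𝕜 v v - rankOne 𝕜 w w‖
      ≤ ‖v - w‖ * ‖v‖ + ‖w‖ * ‖v - w‖ := by
        rw [h, ← InnerProductSpace.norm_rankOne (𝕜 := 𝕜),
          ← InnerProductSpace.norm_rankOne (𝕜 := 𝕜)]
        exact norm_add_le _ _
    _ ≤ ‖v - w‖ * 1 + 1 * ‖v - w‖ := by gcongr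
    _ = 2 * ‖v - w‖ := by ring

theorem Submodule.starProjection_eq_sum_rankOne_of_orthonormal {ι : Type*} [Fintype ι]
    {U : Submodule 𝕜 E} [U.HasOrthogonalProjection] {w : ι → E} (hw : Orthonormal 𝕜 w)
    (hU : span 𝕜 (Set.range w) = U) :
    U.starProjection = ∑ i, rankOne 𝕜 (w i) (w i) := by
  subst hU
  let b₀ : Module.Basis ι 𝕜 (span 𝕜 (Set.range w)) := .span hw.linearIndependent
  have hb₀ : Orthonormal 𝕜 b₀ := by
    rw [show ⇑b₀ = _ from funext (Module.Basis.span_apply _)]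
    exact orthonormal_span hw
  let b := b₀.toOrthonormalBasis hb₀
  simp only [b.starProjection_eq_sum_rankOne, b, b₀, Module.Basis.coe_toOrthonormalBasis,
    Module.Basis.span_apply]

end InnerProductSpace

theorem norm_sub_le_abs_of_inner_eq_cos {E : Type*} [NormedAddCommGroup E]
    [InnerProductSpace ℝ E] {v w : E} (hv : ‖v‖ = 1) (hw : ‖w‖ = 1) {t : ℝ}
    (h : ⟪v, w⟫ = Real.cos t) : ‖v - w‖ ≤ |t| := by
  have hsq : ‖v - w‖ ^ 2 = 2 - 2 * Real.cos t := by
    rw [norm_sub_sq_real, hv, hw, h]; ring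
  have hcos := Real.one_sub_sq_div_two_le_cos (x := t)
  simpa using sq_le_sq.1 (by nlinarith : ‖v - w‖ ^ 2 ≤ t ^ 2)

theorem LinearMap.exists_orthonormalBasis_pairwise_inner_eq_zero {𝕜 E F : Type*} [RCLike 𝕜]
    [NormedAddCommGroup E] [InnerProductSpace 𝕜 E] [FiniteDimensional 𝕜 E]
    [NormedAddCommGroup F] [InnerProductSpace 𝕜 F] [FiniteDimensional 𝕜 F]
    {n : ℕ} (hn : Module.finrank 𝕜 E = n) (A : E →ₗ[𝕜] F) :
    ∃ e : OrthonormalBasis (Fin n) 𝕜 E, Pairwise fun i j => inner 𝕜 (A (e i)) (A (e j)) = 0 := by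
  have hT := isSymmetric_adjoint_comp_self A
  refine ⟨hT.eigenvectorBasis hn, fun i j hij => ?_⟩
  change inner 𝕜 (A _) (A _) = 0
  rw [← adjoint_inner_right, ← comp_apply, hT.apply_eigenvectorBasis, inner_smul_right,
    (hT.eigenvectorBasis hn).orthonormal.2 hij, mul_zero]

section GraphFrame

variable {p q : ℕ} (A : EuclideanSpace ℝ (Fin p) →ₗ[ℝ] EuclideanSpace ℝ (Fin q))
  (e : OrthonormalBasis (Fin p) ℝ (EuclideanSpace ℝ (Fin p)))

noncomputable def graphAngle (s : ℝ) (i : Fin p) : ℝ :=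
  Real.arctan (s * ‖A (e i)‖)

-- `cos (arctan x) = 1 / √(1 + x²)` normalizes `(eᵢ, s A eᵢ)`.
noncomputable def graphFrame (s : ℝ) (i : Fin p) : EucProd p q :=
  Real.cos (graphAngle A e s i) • WithLp.toLp 2 (e i, s • A (e i))

theorem graphAngle_monotone (i : Fin p) : Monotone fun s => graphAngle A e s i :=
  fun _ _ h => Real.arctan_strictMono.monotone (mul_le_mul_of_nonneg_right h (norm_nonneg _))

theorem graphAngle_sub_le_pi (s s' : ℝ) (i : Fin p) :
    graphAngle A e s' i - graphAngle A e s i ≤ Real.pi := by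
  have := Real.arctan_lt_pi_div_two (s' * ‖A (e i)‖)
  have := Real.neg_pi_div_two_lt_arctan (s * ‖A (e i)‖)
  rw [graphAngle, graphAngle]
  linarith

variable {A e}

theorem inner_graphFrame (he : Pairwise fun i j => ⟪A (e i), A (e j)⟫ = 0) (s s' : ℝ)
    (i j : Fin p) :
    ⟪graphFrame A e s i, graphFrame A e s' j⟫ =
      if i = j then Real.cos (graphAngle A e s i - graphAngle A e s' i) else 0 := by
  have hexp : ⟪graphFrame A e s i, graphFrame A e s' j⟫ = Real.cos (graphAngle A e s i) *
      Real.cos (graphAngle A e s' j) * (⟪e i, e j⟫ + s * s' * ⟪A (e i), A (e j)⟫) := by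
    simp only [graphFrame, WithLp.prod_inner_apply, WithLp.ofLp_smul,
      Prod.smul_fst, Prod.smul_snd, real_inner_smul_left, real_inner_smul_right]
    ring
  split_ifs with hij
  · subst hij
    rw [hexp, graphAngle, graphAngle, Real.cos_arctan_sub_arctan, real_inner_self_eq_norm_sq,
      real_inner_self_eq_norm_sq, e.orthonormal.1 i]
    ring
  · rw [hexp, e.orthonormal.2 hij, he hij]
    ring

theorem orthonormal_graphFrame (he : Pairwise fun i j => ⟪A (e i), A (e j)⟫ = 0) (s : ℝ) :
    Orthonormal ℝ (graphFrame A e s) := by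
  classical
  rw [orthonormal_iff_ite]
  intro i j
  rw [inner_graphFrame he]
  split_ifs <;> simp

theorem graphFrame_mem_graphSub (s : ℝ) (i : Fin p) :
    graphFrame A e s i ∈ graphSub (s • A) := by
  simp [graphSub, graphFrame, LinearMap.mem_graph_iff]

theorem finrank_graphSub (B : EuclideanSpace ℝ (Fin p) →ₗ[ℝ] EuclideanSpace ℝ (Fin q)) :
    Module.finrank ℝ (graphSub B) = p := by
  have hinj : Function.Injective (LinearMap.id.prod B) := fun x y h => congrArg Prod.fst h
  rw [graphSub, Submodule.comap_equiv_eq_map_symm, LinearEquiv.finrank_map_eq,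
    LinearMap.graph_eq_range_prod, LinearMap.finrank_range_of_inj hinj,
    finrank_euclideanSpace_fin]

theorem span_graphFrame (he : Pairwise fun i j => ⟪A (e i), A (e j)⟫ = 0) (s : ℝ) :
    Submodule.span ℝ (Set.range (graphFrame A e s)) = graphSub (s • A) := by
  refine Submodule.eq_of_le_of_finrank_eq
    (Submodule.span_le.2 (Set.range_subset_iff.2 (graphFrame_mem_graphSub s))) ?_
  rw [finrank_span_eq_card (orthonormal_graphFrame he s).linearIndependent, finrank_graphSub,
    Fintype.card_fin]

theorem projOnto_graphSub_smul (he : Pairwise fun i j => ⟪A (e i), A (e j)⟫ = 0) (s : ℝ) :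
    projOnto (graphSub (s • A)) = ∑ i, rankOne ℝ (graphFrame A e s i) (graphFrame A e s i) :=
  Submodule.starProjection_eq_sum_rankOne_of_orthonormal (orthonormal_graphFrame he s)
    (span_graphFrame he s)

theorem norm_graphFrame_sub_le (he : Pairwise fun i j => ⟪A (e i), A (e j)⟫ = 0) (s s' : ℝ)
    (i : Fin p) :
    ‖graphFrame A e s' i - graphFrame A e s i‖ ≤ |graphAngle A e s' i - graphAngle A e s i| :=
  norm_sub_le_abs_of_inner_eq_cos ((orthonormal_graphFrame he s').1 i)
    ((orthonormal_graphFrame he s).1 i) (by rw [inner_graphFrame he, if_pos rfl])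

theorem norm_projOnto_graphSub_smul_sub_le (he : Pairwise fun i j => ⟪A (e i), A (e j)⟫ = 0)
    (s s' : ℝ) :
    ‖projOnto (graphSub (s' • A)) - projOnto (graphSub (s • A))‖ ≤
      2 * ∑ i, |graphAngle A e s' i - graphAngle A e s i| := by
  rw [projOnto_graphSub_smul he, projOnto_graphSub_smul he, ← Finset.sum_sub_distrib,
    Finset.mul_sum]
  refine (norm_sum_le _ _).trans (Finset.sum_le_sum fun i _ => ?_)
  exact (norm_rankOne_self_sub_rankOne_self_le ((orthonormal_graphFrame he s').1 i).le
    ((orthonormal_graphFrame he s).1 i).le).trans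
    (mul_le_mul_of_nonneg_left (norm_graphFrame_sub_le he s s' i) zero_le_two)

end GraphFrame

/-- There is a constant `C = C(p, q)` such that for every linear map `A : ℝ^p → ℝ^q`, the
curve `s ↦ P(graph(s • A))` of orthogonal projections of `ℝ^{p+q}` onto the graphs of the
maps `s • A` has total variation at most `C` over `s ∈ ℝ`, uniformly in `A`:
every partition sum `Σ_j ‖P(graph(s_{j+1} A)) − P(graph(s_j A))‖` is bounded by `C`.
(Up to the reparametrization `s = 1/t` these are the trajectories of the Harvey–Lawson
multiplicative flow through the graph of a linear map.) -/
theorem multiplicative_flow_trajectories_have_uniformly_bounded_length (p q : ℕ) :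
    ∃ C : ℝ, ∀ A : EuclideanSpace ℝ (Fin p) →ₗ[ℝ] EuclideanSpace ℝ (Fin q),
      ∀ (k : ℕ) (s : Fin (k + 1) → ℝ), StrictMono s →
        ∑ j : Fin k,
            ‖projOnto (graphSub (s j.succ • A)) - projOnto (graphSub (s j.castSucc • A))‖
          ≤ C := by
  refine ⟨2 * (p * Real.pi), fun A k s hs => ?_⟩
  obtain ⟨e, he⟩ := A.exists_orthonormalBasis_pairwise_inner_eq_zero finrank_euclideanSpace_fin
  calc ∑ j : Fin k,
        ‖projOnto (graphSub (s j.succ • A)) - projOnto (graphSub (s j.castSucc • A))‖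
      ≤ ∑ j : Fin k, 2 * ∑ i,
          |graphAngle A e (s j.succ) i - graphAngle A e (s j.castSucc) i| :=
        Finset.sum_le_sum fun j _ => norm_projOnto_graphSub_smul_sub_le he _ _
    _ = 2 * ∑ i, ∑ j : Fin k,
          |graphAngle A e (s j.succ) i - graphAngle A e (s j.castSucc) i| := by
        rw [← Finset.mul_sum, Finset.sum_comm]
    _ = 2 * ∑ i, (graphAngle A e (s (Fin.last k)) i - graphAngle A e (s 0) i) := by
        congr 1
        exact Finset.sum_congr rfl fun i _ =>
          ((graphAngle_monotone A e i).comp hs.monotone).sum_abs_succ_sub_castSucc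
    _ ≤ 2 * ∑ _i : Fin p, Real.pi := by
        gcongr with i
        exact graphAngle_sub_le_pi A e _ _ i
    _ = 2 * (p * Real.pi) := by simp
end

section
/- Let E be a real inner product space, W a complete (e.g. finite-dimensional) subspace of E, e ∈ W a nonzero vector, and d ∈ E. Write d = v + w with v ∈ W and w orthogonal to W (v is the orthogonal projection of d onto W). Let U > 0 and suppose that ⟨e, e + u·d⟩ > 0 for all u ∈ [0, U]. Then e + u·v ≠ 0 for all u ∈ [0,U], and the function u ↦ u·‖w‖ / ‖e + u·v‖ — the tangent of the angle between the vector e(u) = e + u·d and the subspace W — is monotone nondecreasing on [0, U], and strictly increasing on [0,U] if w ≠ 0. (This is the corrected monotonicity claim (2.26)–(2.27) in the proof of Lemma 3: the positivity of the inner products ⟨e(t'), e(t'')⟩ forces the angle between e(t'') and V(t') to increase.) -/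
open scoped RealInnerProductSpace

/-- **The monotonicity claim (2.26)–(2.27) in the proof of Lemma 3 of the paper.**
Let `W` be a subspace of a real inner product space `E`, `e ∈ W` nonzero, and `d = v + w`
with `v ∈ W` and `w ⟂ W`.  If `⟪e, e + u·d⟫ > 0` for all `u ∈ [0, U]` (`U > 0`), then
`e + u·v ≠ 0` on `[0, U]` and the tangent `u·‖w‖ / ‖e + u·v‖` of the angle between
`e + u·d` and `W` is monotone nondecreasing on `[0, U]`, strictly increasing if `w ≠ 0`. -/
theorem angle_to_subspace_monotone {E : Type*} [NormedAddCommGroup E]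
    [InnerProductSpace ℝ E] (W : Submodule ℝ E) [CompleteSpace W]
    (e : E) (he : e ∈ W) (he0 : e ≠ 0) (d v w : E)
    (hv : v ∈ W) (hw : w ∈ Wᗮ) (hd : d = v + w)
    (U : ℝ) (hU : 0 < U) (hpos : ∀ u ∈ Set.Icc (0 : ℝ) U, 0 < ⟪e, e + u • d⟫) :
    (∀ u ∈ Set.Icc (0 : ℝ) U, e + u • v ≠ 0) ∧
    MonotoneOn (fun u : ℝ => u * ‖w‖ / ‖e + u • v‖) (Set.Icc 0 U) ∧
    (w ≠ 0 → StrictMonoOn (fun u : ℝ => u * ‖w‖ / ‖e + u • v‖) (Set.Icc 0 U)) := by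
  have hew : ⟪e, w⟫ = 0 := (Submodule.mem_orthogonal W w).mp hw e he
  have hpos' : ∀ u ∈ Set.Icc (0 : ℝ) U, 0 < ⟪e, e + u • v⟫ := by
    intro u hu
    have h := hpos u hu
    rw [hd] at h
    have heq : ⟪e, e + u • (v + w)⟫ = ⟪e, e + u • v⟫ := by
      simp [smul_add, inner_add_right, inner_smul_right, hew]
    linarith [heq ▸ h]
  have hne : ∀ u ∈ Set.Icc (0 : ℝ) U, e + u • v ≠ 0 := by
    intro u hu h
    have := hpos' u hu
    rw [h, inner_zero_right] at this
    exact lt_irrefl 0 this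
  have hnorm : ∀ u ∈ Set.Icc (0 : ℝ) U, 0 < ‖e + u • v‖ := by
    intro u hu
    exact norm_pos_iff.mpr (hne u hu)
  -- key strict inequality
  have hkey : ∀ s ∈ Set.Icc (0 : ℝ) U, ∀ t ∈ Set.Icc (0 : ℝ) U, s < t →
      s * ‖e + t • v‖ < t * ‖e + s • v‖ := by
    intro s hs t ht hst
    have hs0 : 0 ≤ s := hs.1
    have ht0 : 0 < t := lt_of_le_of_lt hs0 hst
    have hips : 0 < ⟪e, e + s • v⟫ := hpos' s hs
    have hipt : 0 < ⟪e, e + t • v⟫ := hpos' t ht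
    have hexp : ∀ u : ℝ, ‖e + u • v‖ ^ 2 = ‖e‖ ^ 2 + 2 * (u * ⟪e, v⟫) + u ^ 2 * ‖v‖ ^ 2 := by
      intro u
      rw [norm_add_sq_real, inner_smul_right, norm_smul]
      rw [mul_pow, Real.norm_eq_abs, sq_abs]
    have hipe : ∀ u : ℝ, ⟪e, e + u • v⟫ = ‖e‖ ^ 2 + u * ⟪e, v⟫ := by
      intro u
      rw [inner_add_right, inner_smul_right, real_inner_self_eq_norm_sq]
    have hid : (t * ‖e + s • v‖) ^ 2 - (s * ‖e + t • v‖) ^ 2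
        = (t - s) * (s * ⟪e, e + t • v⟫ + t * ⟪e, e + s • v⟫) := by
      rw [mul_pow, mul_pow, hexp s, hexp t, hipe s, hipe t]
      ring
    have hprod : 0 < (t - s) * (s * ⟪e, e + t • v⟫ + t * ⟪e, e + s • v⟫) := by
      apply mul_pos (sub_pos.mpr hst)
      have := mul_pos ht0 hips
      have := mul_nonneg hs0 hipt.le
      linarith
    have hsq : (s * ‖e + t • v‖) ^ 2 < (t * ‖e + s • v‖) ^ 2 := by linarith
    exact lt_of_pow_lt_pow_left₀ 2 (mul_nonneg ht0.le (norm_nonneg _)) hsq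
  refine ⟨hne, ?_, ?_⟩
  · intro x hx y hy hxy
    rcases eq_or_lt_of_le hxy with rfl | hlt
    · exact le_refl _
    · simp only
      rw [div_le_div_iff₀ (hnorm x hx) (hnorm y hy)]
      have hk := (hkey x hx y hy hlt).le
      nlinarith [norm_nonneg w]
  · intro hw0 x hx y hy hxy
    simp only
    rw [div_lt_div_iff₀ (hnorm x hx) (hnorm y hy)]
    have hk := hkey x hx y hy hxy
    have hw' : 0 < ‖w‖ := norm_pos_iff.mpr hw0
    nlinarith
end

section
/- Let V and W be subspaces of a real inner product space with dim V = dim W = p for some p ≥ 1, and define the angle ∠(V, W) = sup_{v ∈ V, v ≠ 0} inf_{w ∈ W, w ≠ 0} ∠(v, w), where ∠(v,w) ∈ [0, π] is the angle between the vectors v and w. Then 0 ≤ ∠(V,W) ≤ π/2, and ∠(V, W) = π/2 if and only if there exists a nonzero vector w ∈ W orthogonal to V. (This is the characterization of the non-Riemannian metric ∠ on the Grassmannian stated after (2.24) in the paper.) -/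
/-! For `v ∈ V` the inner infimum is at most `π / 2` (replace `w` by `-w`), and it equals `π / 2`
when `v ⊥ W`; so `∠(V, W) = π / 2` as soon as `V ⊓ Wᗮ ≠ ⊥`. Conversely, if `V ⊓ Wᗮ = ⊥`, the
projection `P` onto `W` is injective on the finite-dimensional `V`, hence bounded below:
`c ‖v‖ ≤ ‖P v‖` with `c > 0`, and `∠(v, P v) = arccos (‖P v‖ / ‖v‖) ≤ arccos c < π / 2` uniformly
in `v`. Finally, when `dim V = dim W`, `V ⊓ Wᗮ = ⊥` iff `W ⊓ Vᗮ = ⊥`: if `P` is injective on `V`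
it maps `V` onto `W`, and `w = P v` orthogonal to `V` has
`‖w‖² = ⟪w, P v⟫ = ⟪P w, v⟫ = ⟪w, v⟫ = 0`. -/

open Real

/-- The (non-Riemannian) angle between two subspaces of a real inner product space:
`∠(V, W) = sup_{v ∈ V, v ≠ 0} inf_{w ∈ W, w ≠ 0} ∠(v, w)`, where `∠(v, w) ∈ [0, π]` is
the angle between the vectors `v` and `w` (formula (2.24) of the paper). -/
noncomputable def subspaceAngle {E : Type*} [NormedAddCommGroup E]
    [InnerProductSpace ℝ E] (V W : Submodule ℝ E) : ℝ :=
  ⨆ v : {x : E // x ∈ V ∧ x ≠ 0}, ⨅ w : {x : E // x ∈ W ∧ x ≠ 0},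
    InnerProductGeometry.angle (v : E) (w : E)

open InnerProductGeometry Module
open scoped InnerProductSpace

section

variable {𝕜 E : Type*} [RCLike 𝕜] [NormedAddCommGroup E] [InnerProductSpace 𝕜 E]
  {V W : Submodule 𝕜 E}

lemma injective_orthogonalProjectionOnto_comp_subtype [W.HasOrthogonalProjection]
    (h : Disjoint V Wᗮ) :
    Function.Injective (W.orthogonalProjectionOnto.toLinearMap ∘ₗ V.subtype) :=
  (injective_iff_map_eq_zero _).mpr fun v hv => Subtype.ext <|
    Submodule.disjoint_def.mp h v v.2 (Submodule.orthogonalProjectionOnto_eq_zero_iff.mp hv)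

lemma exists_pos_mul_norm_le_norm_starProjection [FiniteDimensional 𝕜 V]
    [W.HasOrthogonalProjection] (h : Disjoint V Wᗮ) :
    ∃ c > 0, ∀ v ∈ V, c * ‖v‖ ≤ ‖W.starProjection v‖ := by
  obtain ⟨K, -, hK⟩ := (LinearMap.injective_iff_antilipschitz _).mp
    (injective_orthogonalProjectionOnto_comp_subtype h)
  obtain ⟨c, hc, hcV⟩ := antilipschitzWith_iff_exists_mul_le_norm.mp ⟨K, hK⟩
  exact ⟨c, hc, fun v hv => hcV ⟨v, hv⟩⟩

lemma disjoint_orthogonal_of_finrank_eq [FiniteDimensional 𝕜 V] [FiniteDimensional 𝕜 W]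
    (hVW : finrank 𝕜 V = finrank 𝕜 W) (h : Disjoint V Wᗮ) : Disjoint W Vᗮ := by
  have hsurj := (LinearMap.injective_iff_surjective_of_finrank_eq_finrank hVW).mp
    (injective_orthogonalProjectionOnto_comp_subtype h)
  refine Submodule.disjoint_def.mpr fun w hw hwV => ?_
  obtain ⟨v, hv⟩ := hsurj ⟨w, hw⟩
  have hPv : W.starProjection (v : E) = w := congrArg Subtype.val hv
  rw [← inner_self_eq_zero (𝕜 := 𝕜)]
  nth_rewrite 2 [← hPv]
  rw [← W.inner_starProjection_left_eq_right, Submodule.starProjection_eq_self_iff.mpr hw]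
  exact Submodule.inner_left_of_mem_orthogonal v.2 hwV

lemma disjoint_orthogonal_comm_of_finrank_eq [FiniteDimensional 𝕜 V] [FiniteDimensional 𝕜 W]
    (hVW : finrank 𝕜 V = finrank 𝕜 W) : Disjoint V Wᗮ ↔ Disjoint W Vᗮ :=
  ⟨disjoint_orthogonal_of_finrank_eq hVW, disjoint_orthogonal_of_finrank_eq hVW.symm⟩

end

section

variable {E : Type*} [NormedAddCommGroup E] [InnerProductSpace ℝ E]

lemma bddBelow_range_angle {ι : Type*} (v : E) (f : ι → E) :
    BddBelow (Set.range fun i => angle v (f i)) :=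
  ⟨0, by rintro _ ⟨i, rfl⟩; exact angle_nonneg _ _⟩

lemma angle_starProjection_self (K : Submodule ℝ E) [K.HasOrthogonalProjection] (v : E) :
    angle v (K.starProjection v) = arccos (‖K.starProjection v‖ / ‖v‖) := by
  by_cases hv : K.starProjection v = 0
  · simp [hv]
  have hinner : ⟪v, K.starProjection v⟫_ℝ = ‖K.starProjection v‖ ^ 2 := by
    have h := K.starProjection_inner_eq_zero v _ (K.starProjection_apply_mem v)
    rw [inner_sub_left, sub_eq_zero] at h
    rw [h, real_inner_self_eq_norm_sq]
  rw [angle, hinner, sq, mul_div_mul_right _ _ (norm_ne_zero_iff.mpr hv)]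

lemma iInf_angle_le_pi_div_two (v : E) (W : Submodule ℝ E) :
    ⨅ w : {x : E // x ∈ W ∧ x ≠ 0}, angle v (w : E) ≤ π / 2 := by
  cases isEmpty_or_nonempty {x : E // x ∈ W ∧ x ≠ 0} with
  | inl _ => rw [Real.iInf_of_isEmpty]; positivity
  | inr hne =>
    obtain ⟨w, hw, hw0⟩ := hne
    have hbdd := bddBelow_range_angle v (Subtype.val : {x : E // x ∈ W ∧ x ≠ 0} → E)
    rcases le_total (angle v w) (π / 2) with h | h
    · exact (ciInf_le hbdd ⟨w, hw, hw0⟩).trans h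
    · refine (ciInf_le hbdd ⟨-w, W.neg_mem hw, neg_ne_zero.mpr hw0⟩).trans ?_
      rw [angle_neg_right]
      linarith

lemma subspaceAngle_nonneg (V W : Submodule ℝ E) : 0 ≤ subspaceAngle V W :=
  Real.iSup_nonneg fun _ => Real.iInf_nonneg fun _ => angle_nonneg _ _

lemma subspaceAngle_le_pi_div_two (V W : Submodule ℝ E) : subspaceAngle V W ≤ π / 2 :=
  Real.iSup_le (fun v => iInf_angle_le_pi_div_two (v : E) W) (by positivity)

lemma subspaceAngle_eq_pi_div_two_of_not_disjoint {V W : Submodule ℝ E}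
    (h : ¬Disjoint V Wᗮ) (hW : W ≠ ⊥) : subspaceAngle V W = π / 2 := by
  obtain ⟨v, hv, hvW, hv0⟩ : ∃ v ∈ V, v ∈ Wᗮ ∧ v ≠ 0 := by
    simpa [Submodule.disjoint_def] using h
  obtain ⟨w, hw, hw0⟩ := W.ne_bot_iff.mp hW
  have : Nonempty {x : E // x ∈ W ∧ x ≠ 0} := ⟨⟨w, hw, hw0⟩⟩
  have hinf : ⨅ w : {x : E // x ∈ W ∧ x ≠ 0}, angle v (w : E) = π / 2 :=
    (iInf_angle_le_pi_div_two v W).antisymm <| le_ciInf fun w =>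
      ((inner_eq_zero_iff_angle_eq_pi_div_two _ _).mp (Submodule.inner_left_of_mem_orthogonal
        w.2.1 hvW)).ge
  refine (subspaceAngle_le_pi_div_two V W).antisymm ?_
  have hbdd : BddAbove (Set.range fun u : {x : E // x ∈ V ∧ x ≠ 0} =>
      ⨅ w : {x : E // x ∈ W ∧ x ≠ 0}, angle (u : E) (w : E)) :=
    ⟨π / 2, by rintro _ ⟨u, rfl⟩; exact iInf_angle_le_pi_div_two (u : E) W⟩
  exact le_ciSup_of_le hbdd ⟨v, hv, hv0⟩ hinf.ge

lemma subspaceAngle_lt_pi_div_two {V W : Submodule ℝ E} [FiniteDimensional ℝ V]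
    [W.HasOrthogonalProjection] (h : Disjoint V Wᗮ) : subspaceAngle V W < π / 2 := by
  obtain ⟨c, hc, hcV⟩ := exists_pos_mul_norm_le_norm_starProjection h
  have hle (v : {x : E // x ∈ V ∧ x ≠ 0}) :
      ⨅ w : {x : E // x ∈ W ∧ x ≠ 0}, angle (v : E) (w : E) ≤ arccos c := by
    obtain ⟨v, hvV, hv0⟩ := v
    have hv : 0 < ‖v‖ := norm_pos_iff.mpr hv0
    have hPv : c * ‖v‖ ≤ ‖W.starProjection v‖ := hcV v hvV
    have hPv0 : W.starProjection v ≠ 0 := norm_pos_iff.mp ((mul_pos hc hv).trans_le hPv)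
    calc ⨅ w : {x : E // x ∈ W ∧ x ≠ 0}, angle v (w : E)
        ≤ angle v (W.starProjection v) :=
          ciInf_le (bddBelow_range_angle _ _)
            (⟨W.starProjection v, W.starProjection_apply_mem v, hPv0⟩ : {x : E // x ∈ W ∧ x ≠ 0})
      _ = arccos (‖W.starProjection v‖ / ‖v‖) := angle_starProjection_self W v
      _ ≤ arccos c := arccos_le_arccos ((le_div_iff₀ hv).mpr hPv)
  exact (Real.iSup_le hle (arccos_nonneg c)).trans_lt (arccos_lt_pi_div_two.mpr hc)

end

theorem subspaceAngle_le_pi_div_two_and_eq_iff_general {E : Type*} [NormedAddCommGroup E]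
    [InnerProductSpace ℝ E] (V W : Submodule ℝ E)
    [FiniteDimensional ℝ V] [FiniteDimensional ℝ W] (p : ℕ)
    (hV : Module.finrank ℝ V = p) (hW : Module.finrank ℝ W = p) :
    0 ≤ subspaceAngle V W ∧ subspaceAngle V W ≤ π / 2 ∧
      (subspaceAngle V W = π / 2 ↔ ∃ w : E, w ∈ W ∧ w ≠ 0 ∧ w ∈ Vᗮ) := by
  have hdisj := disjoint_orthogonal_comm_of_finrank_eq (hV.trans hW.symm)
  have hexists : (∃ w : E, w ∈ W ∧ w ≠ 0 ∧ w ∈ Vᗮ) ↔ ¬Disjoint W Vᗮ := by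
    simp only [Submodule.disjoint_def, not_forall, exists_prop]
    exact exists_congr fun w => by tauto
  refine ⟨subspaceAngle_nonneg V W, subspaceAngle_le_pi_div_two V W, ⟨fun h => ?_, fun h => ?_⟩⟩
  · rw [hexists, ← hdisj]
    exact fun hVW => (subspaceAngle_lt_pi_div_two hVW).ne h
  · have hW0 : W ≠ ⊥ := let ⟨w, hw, hw0, _⟩ := h; W.ne_bot_iff.mpr ⟨w, hw, hw0⟩
    exact subspaceAngle_eq_pi_div_two_of_not_disjoint (hdisj.not.mpr (hexists.mp h)) hW0

/-- **The characterization of the angle metric stated after (2.24) in the paper.**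
For subspaces `V`, `W` of the same dimension `p ≥ 1`, the angle `∠(V, W)` lies in
`[0, π/2]`, and it equals `π/2` if and only if some nonzero vector of `W` is orthogonal
to `V`. -/
theorem subspaceAngle_le_pi_div_two_and_eq_iff {E : Type*} [NormedAddCommGroup E]
    [InnerProductSpace ℝ E] (V W : Submodule ℝ E)
    [FiniteDimensional ℝ V] [FiniteDimensional ℝ W] (p : ℕ) (hp : 1 ≤ p)
    (hV : Module.finrank ℝ V = p) (hW : Module.finrank ℝ W = p) :
    0 ≤ subspaceAngle V W ∧ subspaceAngle V W ≤ π / 2 ∧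
      (subspaceAngle V W = π / 2 ↔ ∃ w : E, w ∈ W ∧ w ≠ 0 ∧ w ∈ Vᗮ) :=
  subspaceAngle_le_pi_div_two_and_eq_iff_general V W p hV hW
end
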